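/- Fix a real x ≥ 0 and define, for each n ∈ ℕ, N_n(x) = Σ_{k=0}^n c_{n,k}(k+1)x^k p(k,0) and D_n(x) = 1 + Σ_{k=0}^n c_{n,k}(−1)^{k+1} x^k [(k+1−2x²)·p(k,x) + x·p'(k,x)], and the rational approximation g_n(x) = N_n(x)/D_n(x). If there is a constant δ > 0 such that |D_n(x)| ≥ δ for all sufficiently large n, then lim_{n→∞} g_n(x) = exp(−x²). -/

import Mathlib

open Real Filter

/-- The Hermite-type polynomials `p k x`. -/
noncomputable def p : ℕ → ℝ → ℝ
  | 0 => fun _ => 1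
  | (k + 1) => fun x => deriv (p k) x - 2 * x * p k x

/-- Spline coefficients `c_{n,k}`. -/
noncomputable def c (n k : ℕ) : ℝ :=
  ((Nat.factorial n : ℝ) / ((Nat.factorial (n - k) : ℝ) * (Nat.factorial (k + 1) : ℝ))) *
    ((Nat.factorial (2 * n + 1 - k) : ℝ) / (2 * (Nat.factorial (2 * n + 1) : ℝ)))

/-- Numerator of the rational approximation to `exp(-x²)`. -/
noncomputable def N (n : ℕ) (x : ℝ) : ℝ :=
  ∑ k ∈ Finset.range (n + 1), c n k * ((k : ℝ) + 1) * x ^ k * p k 0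

/-- Denominator of the rational approximation to `exp(-x²)`. -/
noncomputable def D (n : ℕ) (x : ℝ) : ℝ :=
  1 + ∑ k ∈ Finset.range (n + 1), c n k * (-1 : ℝ) ^ (k + 1) * x ^ k *
    (((k : ℝ) + 1 - 2 * x ^ 2) * p k x + x * deriv (p k) x)

/-! The `p k` are signed Hermite polynomials: `p k x * exp (-x²)` is the `k`-th derivative of
`exp (-x²)`, so the Taylor series of this entire function about `a` gives the generating function
`∑ p k a * t ^ k / k! = exp (-(2 a t + t²))`. For fixed `k`, `c n k` increases to
`2⁻ᵏ / (2 (k+1)!)` as `n → ∞`, so by dominated convergence (Tannery) the sums `N n x` and `D n x`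
tend to the corresponding series. At `a = 0, t = x/2` the numerator series is
`exp (-x²/4) / 2`; by the recurrence for `p` the denominator series telescopes into the
generating function at `a = x, t = -x/2`, giving `exp (3x²/4) / 2`. The quotient is `exp (-x²)`. -/

open Finset Polynomial Nat
open scoped Complex Topology

-- `p` as a genuine polynomial, so that it can be evaluated on `ℂ`.
noncomputable def pPoly : ℕ → ℝ[X]
  | 0 => 1
  | k + 1 => derivative (pPoly k) - C 2 * X * pPoly k

lemma p_succ_apply (k : ℕ) (x : ℝ) : p (k + 1) x = deriv (p k) x - 2 * x * p k x := rfl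

lemma p_eq_eval_pPoly (k : ℕ) : p k = fun x => (pPoly k).eval x := by
  induction k with
  | zero => funext x; simp [p, pPoly]
  | succ k ih => funext x; simp [p_succ_apply, pPoly, ih, Polynomial.deriv]

lemma iteratedDeriv_cexp_neg_sq (k : ℕ) :
    iteratedDeriv k (fun z : ℂ => cexp (-z ^ 2)) =
      fun z => aeval z (pPoly k) * cexp (-z ^ 2) := by
  induction k with
  | zero => funext z; simp [pPoly]
  | succ k ih =>
    funext z
    have hexp : HasDerivAt (fun z : ℂ => cexp (-z ^ 2)) (cexp (-z ^ 2) * -(2 * z)) z := by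
      simpa using (hasDerivAt_pow 2 z).neg.cexp
    rw [iteratedDeriv_succ, ih, (((pPoly k).hasDerivAt_aeval z).fun_mul hexp).deriv]
    simp [pPoly]
    ring

lemma hasSum_p_mul_pow_div_factorial (a t : ℝ) :
    HasSum (fun k => p k a * t ^ k / k !) (exp (-(2 * a * t + t ^ 2))) := by
  have hf : Differentiable ℂ (fun z : ℂ => cexp (-z ^ 2)) := by fun_prop
  have H := (Complex.hasSum_taylorSeries_of_entire hf (a : ℂ) (a + t)).mul_left (cexp (a ^ 2))
  have hterm : ∀ k : ℕ, cexp (a ^ 2) * ((k ! : ℂ)⁻¹ • ((a : ℂ) + t - a) ^ k •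
      iteratedDeriv k (fun z : ℂ => cexp (-z ^ 2)) a) = ((p k a * t ^ k / k ! : ℝ) : ℂ) := by
    intro k
    have hcast : aeval (a : ℂ) (pPoly k) = (((pPoly k).eval a : ℝ) : ℂ) :=
      aeval_algebraMap_apply_eq_algebraMap_eval a (pPoly k)
    simp only [iteratedDeriv_cexp_neg_sq, p_eq_eval_pPoly, add_sub_cancel_left, hcast,
      smul_eq_mul]
    push_cast
    have hexp : cexp (a ^ 2) * cexp (-a ^ 2) = 1 := by rw [← Complex.exp_add]; simp
    linear_combination (↑(eval a (pPoly k)) * (t : ℂ) ^ k / k !) * hexp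
  have hsum : cexp (a ^ 2) * cexp (-(a + t) ^ 2) = ((exp (-(2 * a * t + t ^ 2)) : ℝ) : ℂ) := by
    push_cast
    rw [← Complex.exp_add]
    ring_nf
  simp only [hterm, hsum] at H
  exact Complex.hasSum_ofReal.mp H

noncomputable def cLimit (k : ℕ) : ℝ := (2 : ℝ)⁻¹ ^ k / (2 * (k + 1)!)

lemma cLimit_nonneg (k : ℕ) : 0 ≤ cLimit k := by unfold cLimit; positivity

lemma c_nonneg (n k : ℕ) : 0 ≤ c n k := by unfold c; positivity

lemma cast_descFactorial_eq_prod {n k : ℕ} (h : k ≤ n) :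
    (n.descFactorial k : ℝ) = ∏ i ∈ range k, ((n : ℝ) - i) := by
  rw [Nat.descFactorial_eq_prod_range, Nat.cast_prod]
  exact prod_congr rfl fun i hi => Nat.cast_sub (by simp at hi; omega)

lemma c_eq_prod {n k : ℕ} (h : k ≤ n) :
    c n k = (∏ i ∈ range k, ((n : ℝ) - i) / (2 * n + 1 - i)) / (2 * (k + 1)!) := by
  have h' : k ≤ 2 * n + 1 := by omega
  rw [prod_div_distrib, ← cast_descFactorial_eq_prod h]
  have := cast_descFactorial_eq_prod h'
  push_cast at this
  rw [← this, c, ← Nat.factorial_mul_descFactorial h, ← Nat.factorial_mul_descFactorial h']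
  push_cast
  field_simp

lemma sub_div_two_mul_add_one_sub_mem_Icc {n i : ℕ} (h : i ≤ n) :
    ((n : ℝ) - i) / (2 * n + 1 - i) ∈ Set.Icc 0 2⁻¹ := by
  have hi : (i : ℝ) ≤ n := by exact_mod_cast h
  have hpos : (0 : ℝ) < 2 * n + 1 - i := by linarith
  constructor
  · exact div_nonneg (by linarith) hpos.le
  · rw [div_le_iff₀ hpos]; linarith

lemma tendsto_sub_div_two_mul_add_one_sub (i : ℕ) :
    Tendsto (fun n : ℕ => ((n : ℝ) - i) / (2 * n + 1 - i)) atTop (𝓝 2⁻¹) := by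
  have h : Tendsto (fun n : ℕ => (1 - (i : ℝ) / n) / (2 + (1 - i) / n)) atTop
      (𝓝 ((1 - 0) / (2 + 0))) :=
    (tendsto_const_nhds.sub (tendsto_const_div_atTop_nhds_zero_nat _)).div
      (tendsto_const_nhds.add (tendsto_const_div_atTop_nhds_zero_nat _)) (by norm_num)
  rw [show ((1 : ℝ) - 0) / (2 + 0) = 2⁻¹ by norm_num] at h
  refine h.congr' ?_
  filter_upwards [eventually_gt_atTop i] with n hn
  have hn0 : (n : ℝ) ≠ 0 := Nat.cast_ne_zero.mpr (by omega)
  have hpos : (2 : ℝ) * n + 1 - i ≠ 0 := by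
    have : (i : ℝ) < n := by exact_mod_cast hn
    linarith
  field_simp
  ring_nf

lemma c_le_cLimit {n k : ℕ} (h : k ≤ n) : c n k ≤ cLimit k := by
  rw [c_eq_prod h, cLimit]
  gcongr
  calc ∏ i ∈ range k, ((n : ℝ) - i) / (2 * n + 1 - i) ≤ ∏ _i ∈ range k, (2 : ℝ)⁻¹ :=
        prod_le_prod (fun i hi => (sub_div_two_mul_add_one_sub_mem_Icc (by simp at hi; omega)).1)
          (fun i hi => (sub_div_two_mul_add_one_sub_mem_Icc (by simp at hi; omega)).2)
    _ = (2 : ℝ)⁻¹ ^ k := by simp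

lemma tendsto_c (k : ℕ) : Tendsto (fun n => c n k) atTop (𝓝 (cLimit k)) := by
  have h := (tendsto_finsetProd (range k) fun i _ =>
    tendsto_sub_div_two_mul_add_one_sub i).div_const (2 * ((k + 1)! : ℝ))
  rw [prod_const, card_range] at h
  refine h.congr' ?_
  filter_upwards [eventually_ge_atTop k] with n hn
  rw [c_eq_prod hn]

lemma tendsto_sum_range_of_dominated {E : Type*} [NormedAddCommGroup E] [CompleteSpace E]
    {f : ℕ → ℕ → E} {F : ℕ → E} {bound : ℕ → ℝ} (h_sum : Summable bound)
    (h_lim : ∀ k, Tendsto (f · k) atTop (𝓝 (F k)))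
    (h_bound : ∀ n k, k ≤ n → ‖f n k‖ ≤ bound k) :
    Tendsto (fun n => ∑ k ∈ range (n + 1), f n k) atTop (𝓝 (∑' k, F k)) := by
  have h := tendsto_tsum_of_dominated_convergence (f := fun n k => if k ≤ n then f n k else 0)
    h_sum (fun k => (h_lim k).congr' ?_) (Eventually.of_forall fun n k => ?_)
  · refine h.congr fun n => ?_
    rw [tsum_eq_sum (s := range (n + 1)) fun k hk => if_neg (by simpa [Nat.lt_succ_iff] using hk)]
    exact sum_congr rfl fun k hk => if_pos (by simpa [Nat.lt_succ_iff] using hk)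
  · filter_upwards [eventually_ge_atTop k] with n hn
    exact (if_pos hn).symm
  · split_ifs with hk
    · exact h_bound n k hk
    · simpa using (norm_nonneg _).trans (h_bound k k le_rfl)

lemma tendsto_sum_c_mul {A : ℕ → ℝ} {L : ℝ} (hL : HasSum (fun k => cLimit k * A k) L) :
    Tendsto (fun n => ∑ k ∈ range (n + 1), c n k * A k) atTop (𝓝 L) := by
  rw [← hL.tsum_eq]
  refine tendsto_sum_range_of_dominated hL.summable.abs (fun k => (tendsto_c k).mul_const _)
    fun n k hk => ?_
  rw [Real.norm_eq_abs, abs_mul, abs_mul, abs_of_nonneg (c_nonneg n k),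
    abs_of_nonneg (cLimit_nonneg k)]
  exact mul_le_mul_of_nonneg_right (c_le_cLimit hk) (abs_nonneg _)

lemma tendsto_N (x : ℝ) : Tendsto (fun n => N n x) atTop (𝓝 (exp (-(x / 2) ^ 2) / 2)) := by
  have hsum := (hasSum_p_mul_pow_div_factorial 0 (x / 2)).div_const 2
  rw [show -(2 * 0 * (x / 2) + (x / 2) ^ 2) = -(x / 2) ^ 2 by ring] at hsum
  refine (tendsto_sum_c_mul (A := fun k => (k + 1) * x ^ k * p k 0)
    (hsum.congr_fun fun k => ?_)).congr fun n => ?_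
  · rw [cLimit, Nat.factorial_succ]
    push_cast
    field_simp
    ring
  · simp only [N, mul_assoc]

lemma tendsto_D (x : ℝ) : Tendsto (fun n => D n x) atTop (𝓝 (exp (3 / 4 * x ^ 2) / 2)) := by
  set v : ℕ → ℝ := fun k => p k x * (-(x / 2)) ^ k / (k ! : ℝ)
  have hv : HasSum v (exp (3 / 4 * x ^ 2)) := by
    have h := hasSum_p_mul_pow_div_factorial x (-(x / 2))
    rwa [show -(2 * x * -(x / 2) + (-(x / 2)) ^ 2) = 3 / 4 * x ^ 2 by ring] at h
  have hv_succ : HasSum (fun k => v (k + 1)) (exp (3 / 4 * x ^ 2) - 1) := by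
    simpa [v, show p 0 x = 1 from rfl] using (hasSum_nat_add_iff' 1).mpr hv
  -- the `k`-th term of the limit series telescopes into Taylor terms, by `p (k+1) = p' k - 2x p k`
  have hterm : ∀ k : ℕ, cLimit k * ((-1) ^ (k + 1) * x ^ k *
      ((k + 1 - 2 * x ^ 2) * p k x + x * deriv (p k) x)) = v (k + 1) - v k / 2 := by
    intro k
    simp only [v, p_succ_apply, cLimit, Nat.factorial_succ, neg_pow (x / 2), div_pow, inv_pow]
    push_cast
    field_simp
    ring
  have h := (tendsto_sum_c_mul ((hv_succ.sub (hv.div_const 2)).congr_fun hterm)).const_add 1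
  rw [show 1 + (exp (3 / 4 * x ^ 2) - 1 - exp (3 / 4 * x ^ 2) / 2) = exp (3 / 4 * x ^ 2) / 2 by
    ring] at h
  simpa only [D, mul_assoc] using h

theorem rational_approx_tendsto_gaussian (x : ℝ) :
    Tendsto (fun n : ℕ => N n x / D n x) atTop (nhds (Real.exp (-x ^ 2))) := by
  have h := (tendsto_N x).div (tendsto_D x) (by positivity)
  rwa [div_div_div_cancel_right₀ two_ne_zero, ← exp_sub,
    show -(x / 2) ^ 2 - 3 / 4 * x ^ 2 = -x ^ 2 by ring] at h
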